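/- Let J be the 4×4 block matrix J = [[Π, 0],[0, Δ]] · [[λ_s I, λ_t I],[λ_s I, λ_t I]] where Π is upper triangular with Π = [[T_1(1−μ_{12}) , T_1 μ_{12}],[0, T_2]] and Δ is upper triangular with Δ = [[Δ_{11}, Δ_{12}],[0, Δ_{22}]], λ_s, λ_t > 0. Then the spectral radius of J equals λ_s · max{ T_1(1−μ_{12}) + (λ_t/λ_s) Δ_{11}, T_2 + (λ_t/λ_s) Δ_{22} }, assuming all of T_1(1−μ_{12}), T_2, Δ_{11}, Δ_{22} are nonnegative. -/

import Mathlib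

/-!
Write `J = B C` with `B = [Π; Δ]` (a `4 × 2` matrix) and `C = [λₛ I, λₜ I]` (a `2 × 4` matrix).
Then `χ_J = X² χ_{CB}`, and `CB = λₛ Π + λₜ Δ` is upper triangular with the nonnegative diagonal
entries `λₛ T₁(1 − μ₁₂) + λₜ Δ₁₁` and `λₛ T₂ + λₜ Δ₂₂`, so the spectrum of `J` consists of `0`
and these two numbers.
-/

open Matrix

/-- The spectral radius of a complex square matrix: supremum of the moduli of its
spectrum (eigenvalues). -/
noncomputable def specRad {n : Type*} [Fintype n] [DecidableEq n]
    (A : Matrix n n ℂ) : ℝ :=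
  sSup ((fun z : ℂ => ‖z‖) '' spectrum ℂ A)

open Polynomial

namespace Matrix

variable {K m n : Type*} [Field K] [Fintype m] [Fintype n] [DecidableEq m] [DecidableEq n]

theorem spectrum_mul_comm_of_card_lt (A : Matrix m n K) (B : Matrix n m K)
    (h : Fintype.card n < Fintype.card m) :
    spectrum K (A * B) = insert 0 (spectrum K (B * A)) := by
  ext z
  simp only [Set.mem_insert_iff, mem_spectrum_iff_isRoot_charpoly,
    charpoly_mul_comm_of_le A B h.le, IsRoot, eval_mul, eval_pow, eval_X, mul_eq_zero,
    pow_eq_zero_iff (Nat.sub_ne_zero_of_lt h)]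

theorem spectrum_of_isUpperTriangular [LinearOrder n] {M : Matrix n n K}
    (h : M.IsUpperTriangular) : spectrum K M = Set.range fun i => M i i := by
  ext z
  simp only [mem_spectrum_iff_isRoot_charpoly, charpoly_of_isUpperTriangular M h, IsRoot.def,
    eval_prod, eval_sub, eval_X, eval_C, Finset.prod_eq_zero_iff, Finset.mem_univ, true_and,
    sub_eq_zero, Set.mem_range]
  exact exists_congr fun _ => eq_comm

theorem spectrum_fin_two_upperTriangular (a b c : K) : spectrum K !![a, b; 0, c] = {a, c} := by
  rw [spectrum_of_isUpperTriangular]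
  · ext z
    simp [Fin.exists_fin_two, eq_comm]
  · intro i j hij
    fin_cases i <;> fin_cases j <;> simp_all

end Matrix

theorem specRad_eq_max_of_spectrum_eq {n : Type*} [Fintype n] [DecidableEq n]
    {A : Matrix n n ℂ} {a b : ℝ} (ha : 0 ≤ a) (hb : 0 ≤ b)
    (h : spectrum ℂ A = {0, (a : ℂ), (b : ℂ)}) :
    specRad A = max a b := by
  have hnorm : (fun z : ℂ => ‖z‖) '' {0, (a : ℂ), (b : ℂ)} = {0, a, b} := by
    simp [Set.image_insert_eq, Complex.norm_real, abs_of_nonneg ha, abs_of_nonneg hb]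
  rw [specRad, h, hnorm, csSup_insert ((Set.finite_singleton b).insert a).bddAbove
    (Set.insert_nonempty a {b}), csSup_pair]
  exact sup_eq_right.mpr (le_max_of_le_left ha)

/-- For the `4×4` Jacobian `J = [[λₛΠ, λₜΠ],[λₛΔ, λₜΔ]]` with upper-triangular
`Π = [[T₁(1−μ₁₂), T₁μ₁₂],[0, T₂]]` and `Δ = [[Δ₁₁, Δ₁₂],[0, Δ₂₂]]`, the spectral
radius equals `λₛ · max{T₁(1−μ₁₂) + (λₜ/λₛ)Δ₁₁, T₂ + (λₜ/λₛ)Δ₂₂}`. -/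
theorem jacobian_spectralRadius_triangular
    (lams lamt T₁ T₂ μ₁₂ Δ₁₁ Δ₁₂ Δ₂₂ : ℝ)
    (hs : 0 < lams) (ht : 0 < lamt)
    (ha : 0 ≤ T₁ * (1 - μ₁₂)) (hb : 0 ≤ T₂) (hd₁ : 0 ≤ Δ₁₁) (hd₂ : 0 ≤ Δ₂₂)
    (J : Matrix (Fin 4) (Fin 4) ℝ)
    (hJ : J = !![lams * (T₁ * (1 - μ₁₂)), lams * (T₁ * μ₁₂),
                   lamt * (T₁ * (1 - μ₁₂)), lamt * (T₁ * μ₁₂);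
                 0, lams * T₂, 0, lamt * T₂;
                 lams * Δ₁₁, lams * Δ₁₂, lamt * Δ₁₁, lamt * Δ₁₂;
                 0, lams * Δ₂₂, 0, lamt * Δ₂₂]) :
    specRad (J.map (Complex.ofReal : ℝ → ℂ)) =
      lams * max (T₁ * (1 - μ₁₂) + (lamt / lams) * Δ₁₁)
                 (T₂ + (lamt / lams) * Δ₂₂) := by
  set p := T₁ * (1 - μ₁₂)
  let B : Matrix (Fin 4) (Fin 2) ℝ := !![p, T₁ * μ₁₂; 0, T₂; Δ₁₁, Δ₁₂; 0, Δ₂₂]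
  let C : Matrix (Fin 2) (Fin 4) ℝ := !![lams, 0, lamt, 0; 0, lams, 0, lamt]
  have hJBC : J = B * C := by
    subst hJ
    ext i j
    fin_cases i <;> fin_cases j <;> simp [B, C, mul_comm]
  have hCB : (C * B).map Complex.ofReal =
      !![((lams * p + lamt * Δ₁₁ : ℝ) : ℂ), (lams * (T₁ * μ₁₂) + lamt * Δ₁₂ : ℝ);
         0, (lams * T₂ + lamt * Δ₂₂ : ℝ)] := by
    ext i j
    fin_cases i <;> fin_cases j <;> simp [B, C]
  have hspec : spectrum ℂ (J.map Complex.ofReal) =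
      {0, ((lams * p + lamt * Δ₁₁ : ℝ) : ℂ), ((lams * T₂ + lamt * Δ₂₂ : ℝ) : ℂ)} := by
    have hmap : ∀ {l k n : Type} [Fintype k] (X : Matrix l k ℝ) (Y : Matrix k n ℝ),
        (X * Y).map Complex.ofReal = X.map Complex.ofReal * Y.map Complex.ofReal :=
      fun X Y => Matrix.map_mul (f := Complex.ofRealHom)
    rw [hJBC, hmap, spectrum_mul_comm_of_card_lt _ _ (by simp), ← hmap, hCB,
      spectrum_fin_two_upperTriangular]
  rw [specRad_eq_max_of_spectrum_eq (by positivity) (by positivity) hspec,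
    mul_max_of_nonneg _ _ hs.le]
  congr 1 <;> field_simp
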